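/- arXiv:1506.08256 — 6 statements merged into one kernel-verified Lean document; each statement's English description precedes it below -/
import Mathlib

section
/- Let S be a set, let c : S × S → ℝ be a valid covariance function, and let G be any family of probability measures such that for every n and every n-tuple of locations (s₁,…,sₙ) ∈ Sⁿ a joint distribution g_{s_n} ∈ G of location errors (u₁,…,uₙ) taking values in Sⁿ is given (with S closed under the addition sᵢ + uᵢ). Define k(s₁,s₂) = E[c(s₁+u₁, s₂+u₂)] for s₁ ≠ s₂ and k(s,s) = E[c(s+u, s+u)], where the expectation is over the errors drawn from g. Then k is a valid covariance function: for every n, every (s₁,…,sₙ) ∈ Sⁿ and every a ∈ ℝⁿ, ∑_{i=1}^n ∑_{j=1}^n aᵢaⱼ k(sᵢ,sⱼ) ≥ 0. -/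
open MeasureTheory

/-- **Proposition 1.** If `c` is a valid covariance function on `S` and, for every `n` and
every tuple of locations `s : Fin n → S`, a joint probability distribution `g n s` of
location errors `(u₁, …, uₙ)` is given, then the induced kernel
`k (sᵢ) (sⱼ) = E[c (sᵢ + uᵢ) (sⱼ + uⱼ)]` is again a valid covariance function. -/
theorem induced_kernel_is_valid_covariance
    {S : Type*} [AddCommMonoid S] [MeasurableSpace S]
    (c : S → S → ℝ)
    (hc : ∀ (n : ℕ) (s : Fin n → S) (a : Fin n → ℝ),
      0 ≤ ∑ i, ∑ j, a i * a j * c (s i) (s j))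
    (g : ∀ n : ℕ, (Fin n → S) → Measure (Fin n → S))
    (hg : ∀ (n : ℕ) (s : Fin n → S), IsProbabilityMeasure (g n s))
    (hint : ∀ (n : ℕ) (s : Fin n → S) (i j : Fin n),
      Integrable (fun u : Fin n → S => c (s i + u i) (s j + u j)) (g n s))
    (k : S → S → ℝ)
    (hk : ∀ (n : ℕ) (s : Fin n → S) (i j : Fin n),
      k (s i) (s j) = ∫ u : Fin n → S, c (s i + u i) (s j + u j) ∂(g n s)) :
    ∀ (n : ℕ) (s : Fin n → S) (a : Fin n → ℝ),
      0 ≤ ∑ i, ∑ j, a i * a j * k (s i) (s j) := by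
  intro n s a
  have h : ∑ i, ∑ j, a i * a j * k (s i) (s j)
      = ∫ u : Fin n → S, ∑ i, ∑ j, a i * a j * c (s i + u i) (s j + u j) ∂(g n s) := by
    rw [integral_finset_sum _ (fun i _ => integrable_finset_sum _
      (fun j _ => ((hint n s i j).const_mul _)))]
    refine Finset.sum_congr rfl fun i _ => ?_
    rw [integral_finset_sum _ (fun j _ => ((hint n s i j).const_mul _))]
    refine Finset.sum_congr rfl fun j _ => ?_
    rw [hk n s i j, integral_const_mul]
  rw [h]
  exact integral_nonneg fun u => hc n (fun i => s i + u i) a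
end

section
/- Fix a dimension p ≥ 1, β > 0 and Δ > 0, and define f : [0,∞) → ℝ by f(t) = 1 − (1+2βt)^{−p} exp(−2βΔ²/(1+2βt)), so that f(0) = 1 − exp(−2βΔ²). Then there exists t > 0 with f(t) < f(0) if and only if βΔ² > p/2. -/
private lemma kale_key_lt (q A s : ℝ) (hq : 0 < q) (hs : 1 < s) (h : q * s < A) :
    Real.exp (-A) < s ^ (-q) * Real.exp (-(A / s)) := by
  have hs0 : (0:ℝ) < s := lt_trans one_pos hs
  rw [Real.rpow_def_of_pos hs0, ← Real.exp_add, Real.exp_lt_exp]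
  have hlog := Real.log_le_sub_one_of_pos hs0
  have hAs : A / s * s = A := div_mul_cancel₀ A (ne_of_gt hs0)
  have hqx : q < A / s := (lt_div_iff₀ hs0).2 h
  nlinarith [mul_pos (sub_pos.2 hs) (sub_pos.2 hqx),
    mul_nonneg hq.le (sub_nonneg.2 hlog)]

private lemma kale_key_le (q A s : ℝ) (hA : 0 ≤ A) (hs : 1 < s) (h : A ≤ q) :
    s ^ (-q) * Real.exp (-(A / s)) ≤ Real.exp (-A) := by
  have hs0 : (0:ℝ) < s := lt_trans one_pos hs
  rw [Real.rpow_def_of_pos hs0, ← Real.exp_add, Real.exp_le_exp]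
  have hlog : 1 - s⁻¹ ≤ Real.log s := by
    have h1 := Real.log_le_sub_one_of_pos (inv_pos.2 hs0)
    rw [Real.log_inv] at h1
    linarith
  have hx : A / s = A * s⁻¹ := div_eq_mul_inv A s
  have hinv : s⁻¹ * s = 1 := inv_mul_cancel₀ (ne_of_gt hs0)
  have hu1 : s⁻¹ < 1 := inv_lt_one_of_one_lt₀ hs
  nlinarith [mul_nonneg (sub_nonneg.2 h) (sub_nonneg.2 hu1.le),
    mul_nonneg (hA.trans h) (sub_nonneg.2 (by linarith : 1 - s⁻¹ ≤ Real.log s))]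

/-- **Proposition 2 (analytic form).** For `p ≥ 1`, `β > 0`, `Δ > 0`, define
`f t = 1 - (1+2βt)^(-p) * exp(-2βΔ²/(1+2βt))`. There exists `t > 0` with
`f t < f 0` if and only if `βΔ² > p/2`. -/
theorem kale_mse_improvement_iff
    (p : ℕ) (hp : 1 ≤ p) (β Δ : ℝ) (hβ : 0 < β) (hΔ : 0 < Δ)
    (f : ℝ → ℝ)
    (hf : ∀ t : ℝ, 0 ≤ t →
      f t = 1 - (1 + 2 * β * t) ^ (-(p : ℝ)) * Real.exp (-2 * β * Δ ^ 2 / (1 + 2 * β * t))) :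
    (∃ t : ℝ, 0 < t ∧ f t < f 0) ↔ β * Δ ^ 2 > (p : ℝ) / 2 := by
  have hp0 : (0:ℝ) < (p:ℝ) := by exact_mod_cast hp
  set A : ℝ := 2 * β * Δ ^ 2 with hA
  have hApos : 0 < A := by positivity
  have hf0 : f 0 = 1 - Real.exp (-A) := by
    rw [hf 0 le_rfl]
    norm_num [Real.one_rpow, hA]
  constructor
  · rintro ⟨t, ht, hlt⟩
    rw [hf t ht.le, hf0] at hlt
    have hs : 1 < 1 + 2 * β * t := by nlinarith
    by_contra hle
    push_neg at hle
    have hAle : A ≤ (p:ℝ) := by rw [hA]; linarith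
    have key := kale_key_le (p:ℝ) A _ hApos.le hs hAle
    have heq : -2 * β * Δ ^ 2 / (1 + 2 * β * t) = -(A / (1 + 2 * β * t)) := by
      rw [hA]; ring
    rw [heq] at hlt
    linarith
  · intro h
    have hAgt : (p:ℝ) < A := by rw [hA]; linarith
    set t : ℝ := (A - (p:ℝ)) / (4 * β * (p:ℝ)) with htdef
    have ht : 0 < t := div_pos (by linarith) (by positivity)
    refine ⟨t, ht, ?_⟩
    rw [hf t ht.le, hf0]
    have h2bt : 2 * β * t = (A - (p:ℝ)) / (2 * (p:ℝ)) := by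
      rw [htdef]; field_simp; ring
    have hdivpos : 0 < (A - (p:ℝ)) / (2 * (p:ℝ)) :=
      div_pos (by linarith) (by positivity)
    have hs : 1 < 1 + 2 * β * t := by rw [h2bt]; linarith
    have hqs : (p:ℝ) * (1 + 2 * β * t) < A := by
      have hmul : (p:ℝ) * (1 + 2 * β * t) = ((p:ℝ) + A) / 2 := by
        rw [h2bt]; field_simp; ring
      rw [hmul]; linarith
    have key := kale_key_lt (p:ℝ) A _ hp0 hs hqs
    have heq : -2 * β * Δ ^ 2 / (1 + 2 * β * t) = -(A / (1 + 2 * β * t)) := by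
      rw [hA]; ring
    rw [heq]
    linarith
end

section
/- Fix a dimension p ≥ 1, β > 0, σ² ≥ 0, and points s, s* ∈ ℝ^p with ‖s−s*‖² = Δ². Let u ~ N(0, σ² I_p) be a p-dimensional Gaussian random vector, and conditional on u let (y, x*) be a centered bivariate Gaussian vector with Var(y) = Var(x*) = 1 and Cov(y, x*) = exp(−β‖s+u−s*‖²). Set γ = E[exp(−β‖s+u−s*‖²)]. Then E[(γ·y − x*)²] = 1 − (1+2βσ²)^{−p} exp(−2βΔ²/(1+2βσ²)). -/
/-!
Conditionally on `u`, the prediction error `γ y - x*` is the linear functional `(γ, -1)` of a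
bivariate Gaussian with covariance `[[1, ρ u], [ρ u, 1]]`, so its conditional second moment is
`γ² - 2γ ρ u + 1`; averaging over `u` with `γ = E ρ` leaves `1 - γ²`. The kernel `ρ u` factors
over the coordinates of `u`, and each factor is a Gaussian integral computed by completing the
square, `E exp(-β (d + X)²) = (1 + 2βv)^(-1/2) exp(-β d² / (1 + 2βv))` for `X ~ N(0, v)`.
-/

open MeasureTheory ProbabilityTheory Matrix

/-- The law of a vector of i.i.d. standard normal random variables indexed by `ι`. -/
noncomputable def stdGaussian (ι : Type*) [Fintype ι] : Measure (ι → ℝ) :=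
  Measure.pi fun _ => gaussianReal 0 1

open Real Finset
open scoped NNReal

section StdGaussian

variable {ι : Type*} [Fintype ι]

lemma integral_dotProduct_stdGaussian (v : ι → ℝ) :
    ∫ z, v ⬝ᵥ z ∂(stdGaussian ι) = 0 := by
  simp only [dotProduct, _root_.stdGaussian]
  rw [integral_finsetSum]
  · simp [integral_const_mul, integral_eval]
  · exact fun i _ => (integrable_eval IsGaussian.integrable_id).const_mul (v i)

lemma integral_sq_dotProduct_stdGaussian (v : ι → ℝ) :
    ∫ z, (v ⬝ᵥ z) ^ 2 ∂(stdGaussian ι) = v ⬝ᵥ v := by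
  have hsum : (fun z : ι → ℝ => v ⬝ᵥ z) = ∑ i, fun z => v i * z i := by
    ext z; simp [dotProduct]
  calc ∫ z, (v ⬝ᵥ z) ^ 2 ∂(stdGaussian ι)
      = Var[fun z => v ⬝ᵥ z; stdGaussian ι] := by
        rw [variance_eq_integral (by fun_prop), integral_dotProduct_stdGaussian]
        simp
    _ = ∑ i, Var[fun x => v i * x; gaussianReal 0 1] := by
        rw [hsum]
        exact variance_sum_pi fun i => (memLp_id_gaussianReal 2).const_mul (v i)
    _ = v ⬝ᵥ v := Finset.sum_congr rfl fun i _ => by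
        rw [variance_const_mul (v i) (fun x => x), variance_fun_id_gaussianReal]
        simp [sq]

lemma integral_sq_dotProduct_mulVec_stdGaussian {κ : Type*} [Fintype κ] (w : κ → ℝ)
    (M : Matrix κ ι ℝ) :
    ∫ z, (w ⬝ᵥ M *ᵥ z) ^ 2 ∂(stdGaussian ι) = w ⬝ᵥ (M * Mᵀ) *ᵥ w := by
  simp only [dotProduct_mulVec w M, integral_sq_dotProduct_stdGaussian]
  rw [← mulVec_mulVec, dotProduct_mulVec, mulVec_transpose]

end StdGaussian

lemma integral_integral_sq_sub_mulVec_stdGaussian {α : Type*} [MeasurableSpace α]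
    (μ : Measure α) [IsProbabilityMeasure μ] {ρ : α → ℝ} (hρ : Integrable ρ μ)
    (A : α → Matrix (Fin 2) (Fin 2) ℝ) (hA : ∀ u, A u * (A u)ᵀ = !![1, ρ u; ρ u, 1]) :
    ∫ u, (∫ z, ((∫ u, ρ u ∂μ) * (A u *ᵥ z) 0 - (A u *ᵥ z) 1) ^ 2 ∂(stdGaussian (Fin 2))) ∂μ
      = 1 - (∫ u, ρ u ∂μ) ^ 2 := by
  set γ := ∫ u, ρ u ∂μ
  have hinner : ∀ u, ∫ z, (γ * (A u *ᵥ z) 0 - (A u *ᵥ z) 1) ^ 2 ∂(stdGaussian (Fin 2))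
      = γ ^ 2 + 1 - 2 * γ * ρ u := fun u => by
    have hfun : ∀ z, γ * (A u *ᵥ z) 0 - (A u *ᵥ z) 1 = ![γ, -1] ⬝ᵥ A u *ᵥ z := fun z => by
      simp only [vec2_dotProduct, mulVec_fin_two, cons_val_zero, cons_val_one]
      ring
    simp_rw [hfun, integral_sq_dotProduct_mulVec_stdGaussian, hA u]
    simp only [vec2_dotProduct, mulVec_fin_two, of_apply, cons_val', cons_val_zero, cons_val_one,
      cons_val_fin_one]
    ring
  rw [integral_congr_ae (ae_of_all _ hinner), integral_sub (integrable_const _)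
    (hρ.const_mul _), integral_const_mul, integral_const, probReal_univ, one_smul]
  ring

lemma integral_exp_neg_mul_sq_add_gaussianReal {β : ℝ} (hβ : 0 ≤ β) (d : ℝ) (v : ℝ≥0) :
    ∫ x, exp (-β * (d + x) ^ 2) ∂(gaussianReal 0 v)
      = (√(1 + 2 * β * v))⁻¹ * exp (-β * d ^ 2 / (1 + 2 * β * v)) := by
  rcases eq_or_ne v 0 with rfl | hv
  · simp [gaussianReal_zero_var]
  set a := β + (2 * v : ℝ)⁻¹ with ha_def
  have ha : a * (2 * v) = 1 + 2 * β * v := by rw [ha_def]; field_simp; ring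
  have hcomplete_sq : ∀ x, gaussianPDFReal 0 v x * exp (-β * (d + x) ^ 2)
      = ((√(2 * π * v))⁻¹ * exp (-β * d ^ 2 / (1 + 2 * β * v)))
        * exp (-a * (x + β * d / a) ^ 2) := fun x => by
    simp only [gaussianPDFReal, mul_assoc, ← exp_add]
    congr 2
    rw [ha_def]
    field_simp
    ring
  rw [integral_gaussianReal_eq_integral_smul hv]
  simp_rw [smul_eq_mul, hcomplete_sq]
  rw [integral_const_mul, integral_add_right_eq_self (fun y => exp (-a * y ^ 2)),
    integral_gaussian, mul_right_comm, ← sqrt_inv, ← sqrt_mul (by positivity), ← sqrt_inv]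
  congr 3
  rw [← ha]
  field_simp

section GaussianKernel

variable {ι : Type*} [Fintype ι] {β : ℝ}

lemma integral_exp_neg_mul_sum_sq_add_pi_gaussianReal (hβ : 0 ≤ β) (d : ι → ℝ) (v : ℝ≥0) :
    ∫ u, exp (-β * ∑ i, (d i + u i) ^ 2) ∂(Measure.pi fun _ : ι => gaussianReal 0 v)
      = (√(1 + 2 * β * v))⁻¹ ^ Fintype.card ι
        * exp (-β * (∑ i, d i ^ 2) / (1 + 2 * β * v)) := by
  simp_rw [mul_sum, exp_sum]
  rw [integral_fintype_prod_eq_prod (fun i x => exp (-β * (d i + x) ^ 2))]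
  simp_rw [integral_exp_neg_mul_sq_add_gaussianReal hβ, prod_mul_distrib, prod_const, card_univ,
    ← exp_sum, ← sum_div]

lemma integrable_exp_neg_mul_sum_sq (hβ : 0 ≤ β) (d : ι → ℝ) (μ : Measure (ι → ℝ))
    [IsFiniteMeasure μ] : Integrable (fun u => exp (-β * ∑ i, (d i + u i) ^ 2)) μ := by
  refine .of_bound (by fun_prop : Continuous _).aestronglyMeasurable 1 (ae_of_all _ fun u => ?_)
  rw [norm_of_nonneg (exp_pos _).le, exp_le_one_iff]
  exact mul_nonpos_of_nonpos_of_nonneg (neg_nonpos.2 hβ)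
    (sum_nonneg fun i _ => sq_nonneg _)

end GaussianKernel

lemma inv_sqrt_pow_sq {x : ℝ} (hx : 0 ≤ x) (n : ℕ) : ((√x)⁻¹ ^ n) ^ 2 = x ^ (-(n : ℝ)) := by
  rw [← pow_mul, mul_comm, pow_mul, inv_pow, sq_sqrt hx, rpow_neg hx, rpow_natCast, inv_pow]

theorem kale_mse_closed_form_general
    (p : ℕ) (β : ℝ) (hβ : 0 < β) (σ2 : NNReal)
    (s sstar : Fin p → ℝ) (Δ2 : ℝ) (hΔ2 : Δ2 = ∑ i, (s i - sstar i) ^ 2)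
    (μ : Measure (Fin p → ℝ)) (hμ : μ = Measure.pi fun _ => gaussianReal 0 σ2)
    (ρ : (Fin p → ℝ) → ℝ)
    (hρ : ∀ u, ρ u = Real.exp (-β * ∑ i, (s i + u i - sstar i) ^ 2))
    (γ : ℝ) (hγ : γ = ∫ u, ρ u ∂μ)
    (A : (Fin p → ℝ) → Matrix (Fin 2) (Fin 2) ℝ)
    (hA : ∀ u, A u * (A u)ᵀ = !![1, ρ u; ρ u, 1]) :
    ∫ u, (∫ z : Fin 2 → ℝ,
        (γ * (A u).mulVec z 0 - (A u).mulVec z 1) ^ 2 ∂(stdGaussian (Fin 2))) ∂μ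
      = 1 - (1 + 2 * β * (σ2 : ℝ)) ^ (-(p : ℝ))
          * Real.exp (-2 * β * Δ2 / (1 + 2 * β * (σ2 : ℝ))) := by
  subst hμ hΔ2 hγ
  have hρ_eq : ρ = fun u => exp (-β * ∑ i, ((s i - sstar i) + u i) ^ 2) := by
    funext u
    simp_rw [hρ, add_sub_right_comm]
  have hρ_int : Integrable ρ (Measure.pi fun _ => gaussianReal 0 σ2) :=
    hρ_eq ▸ integrable_exp_neg_mul_sum_sq hβ.le _ _
  rw [integral_integral_sq_sub_mulVec_stdGaussian _ hρ_int A hA, hρ_eq,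
    integral_exp_neg_mul_sum_sq_add_pi_gaussianReal hβ.le, mul_pow, Fintype.card_fin,
    inv_sqrt_pow_sq (by positivity), ← exp_nat_mul]
  congr 3
  ring

/-- **Closed-form KALE mean squared error with one observation.** Let `u ~ N(0, σ²I_p)`, and
conditionally on `u` let `(y, x*)` be a centered bivariate Gaussian vector with unit
variances and covariance `ρ u = exp(-β‖s+u-s*‖²)` (realized via any matrix square root
`A u` of the conditional covariance matrix applied to a standard bivariate Gaussian).
With `γ = E[ρ u]`, the predictor `γ·y` satisfies
`E[(γ·y - x*)²] = 1 - (1+2βσ²)^(-p) exp(-2βΔ²/(1+2βσ²))`, where `Δ² = ‖s-s*‖²`. -/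
theorem kale_mse_closed_form
    (p : ℕ) (hp : 1 ≤ p) (β : ℝ) (hβ : 0 < β) (σ2 : NNReal)
    (s sstar : Fin p → ℝ) (Δ2 : ℝ) (hΔ2 : Δ2 = ∑ i, (s i - sstar i) ^ 2)
    (μ : Measure (Fin p → ℝ)) (hμ : μ = Measure.pi fun _ => gaussianReal 0 σ2)
    (ρ : (Fin p → ℝ) → ℝ)
    (hρ : ∀ u, ρ u = Real.exp (-β * ∑ i, (s i + u i - sstar i) ^ 2))
    (γ : ℝ) (hγ : γ = ∫ u, ρ u ∂μ)
    (A : (Fin p → ℝ) → Matrix (Fin 2) (Fin 2) ℝ)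
    (hA : ∀ u, A u * (A u)ᵀ = !![1, ρ u; ρ u, 1]) :
    ∫ u, (∫ z : Fin 2 → ℝ,
        (γ * (A u).mulVec z 0 - (A u).mulVec z 1) ^ 2 ∂(stdGaussian (Fin 2))) ∂μ
      = 1 - (1 + 2 * β * (σ2 : ℝ)) ^ (-(p : ℝ))
          * Real.exp (-2 * β * Δ2 / (1 + 2 * β * (σ2 : ℝ))) :=
  kale_mse_closed_form_general p β hβ σ2 s sstar Δ2 hΔ2 μ hμ ρ hρ γ hγ A hA
end

section
/- Fix a dimension p ≥ 1, β > 0 and Δ ≥ 0 with βΔ² ≤ p/2, and define f : [0,∞) → ℝ by f(t) = 1 − (1+2βt)^{−p} exp(−2βΔ²/(1+2βt)). Then f'(t) > 0 for all t > 0, and consequently f(t) ≥ f(0) for all t ≥ 0. -/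
/-!
Write `f t = 1 - g (1 + 2βt)` with `g u = u^(-p) exp(-c/u)` and `c = 2βΔ²`. Logarithmic
differentiation gives `g' u = g u · (c - p u) / u²`, which is negative for `u > 1` as soon as
`c ≤ p`, i.e. `βΔ² ≤ p/2`. Hence `g` is strictly decreasing on `[1, ∞)` and `f` strictly increasing
on `[0, ∞)`.
-/

open Real Set Filter Topology

section RpowNegMulExpNegDiv

variable {a c u : ℝ}

theorem hasDerivAt_rpow_neg_mul_exp_neg_div (hu : 0 < u) :
    HasDerivAt (fun u : ℝ => u ^ (-a) * exp (-c / u))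
      (u ^ (-a) * exp (-c / u) * ((c - a * u) / u ^ 2)) u := by
  have hpow : HasDerivAt (fun u : ℝ => u ^ (-a)) (-a * u ^ (-a - 1)) u :=
    hasDerivAt_rpow_const (Or.inl hu.ne')
  have hexp : HasDerivAt (fun u : ℝ => exp (-c / u)) (exp (-c / u) * (c / u ^ 2)) u := by
    have := ((hasDerivAt_inv hu.ne').const_mul (-c)).exp
    simp only [div_eq_mul_inv]
    convert this using 1
    ring
  refine (hpow.mul hexp).congr_deriv ?_
  rw [rpow_sub hu, rpow_one]
  field_simp
  ring

theorem deriv_rpow_neg_mul_exp_neg_div_neg (ha : 0 < a) (hca : c ≤ a) (hu : 1 < u) :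
    deriv (fun u : ℝ => u ^ (-a) * exp (-c / u)) u < 0 := by
  have hu₀ : 0 < u := by linarith
  rw [(hasDerivAt_rpow_neg_mul_exp_neg_div hu₀).deriv]
  refine mul_neg_of_pos_of_neg (by positivity) (div_neg_of_neg_of_pos ?_ (by positivity))
  nlinarith

theorem strictAntiOn_rpow_neg_mul_exp_neg_div (ha : 0 < a) (hca : c ≤ a) :
    StrictAntiOn (fun u : ℝ => u ^ (-a) * exp (-c / u)) (Ici 1) := by
  refine strictAntiOn_of_deriv_neg (convex_Ici 1) (fun u hu => ?_) (fun u hu => ?_)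
  · exact (hasDerivAt_rpow_neg_mul_exp_neg_div (a := a) (c := c)
      (zero_lt_one.trans_le hu)).continuousAt.continuousWithinAt
  · rw [interior_Ici] at hu
    exact deriv_rpow_neg_mul_exp_neg_div_neg ha hca hu

end RpowNegMulExpNegDiv

theorem kale_mse_increasing_of_small_signal_general
    (p : ℕ) (hp : 1 ≤ p) (β Δ : ℝ) (hβ : 0 < β)
    (hsmall : β * Δ ^ 2 ≤ (p : ℝ) / 2)
    (f : ℝ → ℝ)
    (hf : ∀ t : ℝ, 0 ≤ t →
      f t = 1 - (1 + 2 * β * t) ^ (-(p : ℝ)) * Real.exp (-2 * β * Δ ^ 2 / (1 + 2 * β * t))) :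
    (∀ t : ℝ, 0 < t → 0 < deriv f t) ∧ (∀ t : ℝ, 0 ≤ t → f 0 ≤ f t) := by
  set g := fun u : ℝ => u ^ (-(p : ℝ)) * exp (-(2 * β * Δ ^ 2) / u) with hg
  have hp₀ : (0 : ℝ) < p := by exact_mod_cast hp
  have hc : 2 * β * Δ ^ 2 ≤ p := by linarith
  have hfg : ∀ t, 0 ≤ t → f t = 1 - g (1 + 2 * β * t) := fun t ht => by
    simp only [hf t ht, hg, neg_mul]
  refine ⟨fun t ht => ?_, fun t ht => ?_⟩
  · have hu : 1 < 1 + 2 * β * t := by nlinarith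
    have hlin : HasDerivAt (fun t => 1 + 2 * β * t) (2 * β) t := by
      simpa using ((hasDerivAt_id t).const_mul (2 * β)).const_add 1
    have hF : HasDerivAt (fun t => 1 - g (1 + 2 * β * t))
        (-(deriv g (1 + 2 * β * t) * (2 * β))) t :=
      ((hasDerivAt_rpow_neg_mul_exp_neg_div (by linarith)).differentiableAt.hasDerivAt.comp
        t hlin).const_sub 1
    have hfF : f =ᶠ[𝓝 t] fun t => 1 - g (1 + 2 * β * t) :=
      eventually_of_mem (Ioi_mem_nhds ht) fun s hs => hfg s (le_of_lt hs)
    rw [hfF.deriv_eq, hF.deriv, neg_pos]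
    exact mul_neg_of_neg_of_pos (deriv_rpow_neg_mul_exp_neg_div_neg hp₀ hc hu) (by positivity)
  · rw [hfg 0 le_rfl, hfg t ht, mul_zero, add_zero]
    have hu : (1 : ℝ) ≤ 1 + 2 * β * t := by nlinarith
    exact sub_le_sub_left
      ((strictAntiOn_rpow_neg_mul_exp_neg_div hp₀ hc).antitoneOn self_mem_Ici hu hu) 1

/-- **Proposition 2, 'only if' direction.** For `p ≥ 1`, `β > 0`, `Δ ≥ 0` with `βΔ² ≤ p/2`,
the function `f t = 1 - (1+2βt)^(-p) * exp(-2βΔ²/(1+2βt))` has `f' t > 0` for all `t > 0`,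
and consequently `f t ≥ f 0` for all `t ≥ 0`. -/
theorem kale_mse_increasing_of_small_signal
    (p : ℕ) (hp : 1 ≤ p) (β Δ : ℝ) (hβ : 0 < β) (hΔ : 0 ≤ Δ)
    (hsmall : β * Δ ^ 2 ≤ (p : ℝ) / 2)
    (f : ℝ → ℝ)
    (hf : ∀ t : ℝ, 0 ≤ t →
      f t = 1 - (1 + 2 * β * t) ^ (-(p : ℝ)) * Real.exp (-2 * β * Δ ^ 2 / (1 + 2 * β * t))) :
    (∀ t : ℝ, 0 < t → 0 < deriv f t) ∧ (∀ t : ℝ, 0 ≤ t → f 0 ≤ f t) :=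
  kale_mse_increasing_of_small_signal_general p hp β Δ hβ hsmall f hf
end

section
/- Fix a dimension p ≥ 1, β > 0 and Δ > 0 with βΔ² > p/2, and define f : [0,∞) → ℝ by f(t) = 1 − (1+2βt)^{−p} exp(−2βΔ²/(1+2βt)). Then f'(t) < 0 for all t with 0 < t < Δ²/p − 1/(2β), and consequently f(t) < f(0) for all t in the interval (0, Δ²/p − 1/(2β)). -/
/-!
Writing `u = 1 + 2βt`, the derivative of `f` is `2β u^(-p-1) exp(-2βΔ²/u) (p - 2βΔ²/u)`, whose
sign is that of `p u - 2βΔ²`. For `t < Δ²/p - 1/(2β)` this is negative, so `f` is strictly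
decreasing on `[0, t]`.
-/

open Real Set

noncomputable def kaleMse (β Δ p t : ℝ) : ℝ :=
  1 - (1 + 2 * β * t) ^ (-p) * exp (-2 * β * Δ ^ 2 / (1 + 2 * β * t))

section

variable {β Δ p t : ℝ}

theorem hasDerivAt_kaleMse (hu : 0 < 1 + 2 * β * t) :
    HasDerivAt (kaleMse β Δ p)
      (2 * β * (1 + 2 * β * t) ^ (-p - 1) * exp (-2 * β * Δ ^ 2 / (1 + 2 * β * t))
        * (p - 2 * β * Δ ^ 2 / (1 + 2 * β * t))) t := by
  have hlin : HasDerivAt (fun s : ℝ => 1 + 2 * β * s) (2 * β) t := by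
    simpa using ((hasDerivAt_id t).const_mul (2 * β)).const_add 1
  have hpow := hlin.rpow_const (p := -p) (Or.inl hu.ne')
  have hexp := ((hlin.inv hu.ne').const_mul (-2 * β * Δ ^ 2)).exp
  refine ((hpow.mul hexp).const_sub 1).congr_deriv ?_
  simp only [Pi.inv_apply]
  rw [show (1 + 2 * β * t) ^ (-p) = (1 + 2 * β * t) ^ (-p - 1) * (1 + 2 * β * t) by
    rw [← rpow_add_one hu.ne', sub_add_cancel]]
  field_simp
  ring

theorem deriv_kaleMse_neg (hβ : 0 < β) (ht : 0 ≤ t) (h : p * (1 + 2 * β * t) < 2 * β * Δ ^ 2) :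
    deriv (kaleMse β Δ p) t < 0 := by
  have hu : 0 < 1 + 2 * β * t := by positivity
  rw [(hasDerivAt_kaleMse hu).deriv]
  have hfactor : p - 2 * β * Δ ^ 2 / (1 + 2 * β * t) < 0 := by
    rwa [sub_neg, lt_div_iff₀ hu]
  exact mul_neg_of_pos_of_neg (by positivity) hfactor

theorem strictAntiOn_kaleMse (hβ : 0 < β) (hp : 0 ≤ p) {T : ℝ}
    (hT : p * (1 + 2 * β * T) < 2 * β * Δ ^ 2) :
    StrictAntiOn (kaleMse β Δ p) (Icc 0 T) := by
  refine strictAntiOn_of_deriv_neg (convex_Icc 0 T) ?_ ?_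
  · intro s hs
    have hu : 0 < 1 + 2 * β * s := by have := hs.1; positivity
    exact (hasDerivAt_kaleMse hu).continuousAt.continuousWithinAt
  · intro s hs
    rw [interior_Icc] at hs
    refine deriv_kaleMse_neg hβ hs.1.le (lt_of_le_of_lt ?_ hT)
    gcongr
    exact hs.2.le

end

theorem kale_mse_decreasing_of_large_signal_general
    (p : ℕ) (hp : 1 ≤ p) (β Δ : ℝ) (hβ : 0 < β)
    (f : ℝ → ℝ)
    (hf : ∀ t : ℝ, 0 ≤ t →
      f t = 1 - (1 + 2 * β * t) ^ (-(p : ℝ)) * Real.exp (-2 * β * Δ ^ 2 / (1 + 2 * β * t))) :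
    ∀ t : ℝ, 0 < t → t < Δ ^ 2 / (p : ℝ) - 1 / (2 * β) →
      deriv f t < 0 ∧ f t < f 0 := by
  intro t ht htT
  have hp0 : (0 : ℝ) < p := by exact_mod_cast hp
  have hsignal : (p : ℝ) * (1 + 2 * β * t) < 2 * β * Δ ^ 2 := by
    rw [lt_sub_iff_add_lt, lt_div_iff₀ hp0] at htT
    field_simp at htT
    linarith
  have hfeq : f =ᶠ[nhds t] kaleMse β Δ p := by
    filter_upwards [Ioi_mem_nhds ht] with s hs
    exact hf s (le_of_lt hs)
  refine ⟨hfeq.deriv_eq ▸ deriv_kaleMse_neg hβ ht.le hsignal, ?_⟩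
  rw [hf t ht.le, hf 0 le_rfl]
  exact strictAntiOn_kaleMse hβ hp0.le hsignal (left_mem_Icc.mpr ht.le)
    (right_mem_Icc.mpr ht.le) ht

/-- **Proposition 2, 'if' direction.** For `p ≥ 1`, `β > 0`, `Δ > 0` with `βΔ² > p/2`,
the function `f t = 1 - (1+2βt)^(-p) * exp(-2βΔ²/(1+2βt))` has `f' t < 0` for all
`0 < t < Δ²/p - 1/(2β)`, and consequently `f t < f 0` on that interval. -/
theorem kale_mse_decreasing_of_large_signal
    (p : ℕ) (hp : 1 ≤ p) (β Δ : ℝ) (hβ : 0 < β) (hΔ : 0 < Δ)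
    (hlarge : β * Δ ^ 2 > (p : ℝ) / 2)
    (f : ℝ → ℝ)
    (hf : ∀ t : ℝ, 0 ≤ t →
      f t = 1 - (1 + 2 * β * t) ^ (-(p : ℝ)) * Real.exp (-2 * β * Δ ^ 2 / (1 + 2 * β * t))) :
    ∀ t : ℝ, 0 < t → t < Δ ^ 2 / (p : ℝ) - 1 / (2 * β) →
      deriv f t < 0 ∧ f t < f 0 :=
  kale_mse_decreasing_of_large_signal_general p hp β Δ hβ f hf
end

section
/- Fix a dimension p ≥ 1, τ² > 0, β > 0, σ² ≥ 0, and points s₁, s₂ ∈ ℝ^p. Let u₁, u₂ be independent p-dimensional Gaussian random vectors each distributed N(0, σ² I_p). Then E[τ² exp(−β‖(s₁+u₁) − (s₂+u₂)‖²)] = (τ²/(1+4βσ²)^{p/2}) · exp(−β‖s₁−s₂‖²/(1+4βσ²)). -/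
open MeasureTheory ProbabilityTheory Real
open scoped NNReal

/-!
Averaging the kernel `exp (-a (z + c)²)` over `z ∼ N(0, v)` completes a square and returns
`(1 + 2av)^(-1/2) exp (-(a / (1 + 2av)) c²)`, again a squared exponential in `c`. The coordinates
are independent, so integrating out `u₂` and then `u₁` applies this map twice, and the two rate
updates compose to `β / (1 + 4βσ²)`: a single smoothing by `u₁ - u₂ ∼ N(0, 2σ²)`.
-/

lemma integral_exp_neg_mul_add_sq_gaussianReal {a : ℝ} (ha : 0 ≤ a) (v : ℝ≥0) (c : ℝ) :
    ∫ z, exp (-a * (z + c) ^ 2) ∂gaussianReal 0 v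
      = exp (-(a / (1 + 2 * a * v)) * c ^ 2) / √(1 + 2 * a * v) := by
  rcases eq_or_ne v 0 with rfl | hv
  · simp
  have hv₀ : (0 : ℝ) < v := by positivity
  have hS : (0 : ℝ) < 1 + 2 * a * v := by positivity
  set A := (1 + 2 * a * v) / (2 * v)
  set m := 2 * a * v * c / (1 + 2 * a * v)
  have hsquare : ∀ z, gaussianPDFReal 0 v z • exp (-a * (z + c) ^ 2)
      = (√(2 * π * v))⁻¹ * exp (-(a / (1 + 2 * a * v)) * c ^ 2) * exp (-A * (z + m) ^ 2) := by
    intro z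
    rw [gaussianPDFReal, smul_eq_mul, mul_assoc, ← exp_add, mul_assoc _ (exp _), ← exp_add]
    congr 2
    simp only [A, m]
    field_simp
    ring
  rw [integral_gaussianReal_eq_integral_smul hv]
  simp_rw [hsquare]
  rw [integral_const_mul, integral_add_right_eq_self (fun z => exp (-A * z ^ 2)),
    integral_gaussian, show π / A = 2 * π * v / (1 + 2 * a * v) by simp only [A]; field_simp,
    sqrt_div (by positivity)]
  have : √(2 * π * v) ≠ 0 := by positivity
  field_simp

lemma integral_exp_neg_mul_sum_add_sq_pi_gaussianReal {ι : Type*} [Fintype ι] {a : ℝ} (ha : 0 ≤ a)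
    (v : ℝ≥0) (c : ι → ℝ) :
    ∫ z, exp (-a * ∑ i, (z i + c i) ^ 2) ∂(Measure.pi fun _ => gaussianReal 0 v)
      = exp (-(a / (1 + 2 * a * v)) * ∑ i, c i ^ 2)
          / (1 + 2 * a * v) ^ ((Fintype.card ι : ℝ) / 2) := by
  simp_rw [Finset.mul_sum, exp_sum]
  rw [integral_fintype_prod_eq_prod (fun i z => exp (-a * (z + c i) ^ 2))]
  simp_rw [integral_exp_neg_mul_add_sq_gaussianReal ha, Finset.prod_div_distrib,
    Finset.prod_const, Finset.card_univ]
  rw [sqrt_eq_rpow, ← rpow_natCast, ← rpow_mul (by positivity), one_div_mul_eq_div]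

lemma integral_integral_exp_neg_mul_sum_add_sub_sq_pi_gaussianReal {ι : Type*} [Fintype ι]
    {a : ℝ} (ha : 0 ≤ a) (v : ℝ≥0) (c : ι → ℝ) :
    ∫ z, ∫ w, exp (-a * ∑ i, (z i + c i - w i) ^ 2) ∂(Measure.pi fun _ => gaussianReal 0 v)
        ∂(Measure.pi fun _ => gaussianReal 0 v)
      = exp (-(a / (1 + 4 * a * v)) * ∑ i, c i ^ 2)
          / (1 + 4 * a * v) ^ ((Fintype.card ι : ℝ) / 2) := by
  have hS : 0 < 1 + 2 * a * v := by positivity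
  set a' := a / (1 + 2 * a * v)
  have hreflect : ∀ z w : ι → ℝ,
      ∑ i, (z i + c i - w i) ^ 2 = ∑ i, (w i + -(z i + c i)) ^ 2 :=
    fun z w => Finset.sum_congr rfl fun i _ => by ring
  simp_rw [hreflect, integral_exp_neg_mul_sum_add_sq_pi_gaussianReal ha, neg_sq]
  rw [integral_div, integral_exp_neg_mul_sum_add_sq_pi_gaussianReal (by positivity)]
  -- smoothing twice with variance `v` is smoothing once with variance `2v`
  have hvar : 1 + 2 * a' * v = (1 + 4 * a * v) / (1 + 2 * a * v) := by
    simp only [a']; field_simp; ring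
  have hrate : a' / (1 + 2 * a' * v) = a / (1 + 4 * a * v) := by
    rw [hvar, div_div_div_cancel_right₀ hS.ne']
  rw [hrate, div_div, ← mul_rpow (by positivity) hS.le, hvar, div_mul_cancel₀ _ hS.ne']

theorem induced_sqexp_covariance_general
    (p : ℕ) (τ2 β : ℝ) (hβ : 0 < β) (σ2 : NNReal)
    (s₁ s₂ : Fin p → ℝ)
    (μ : Measure (Fin p → ℝ)) (hμ : μ = Measure.pi fun _ => gaussianReal 0 σ2) :
    ∫ u : (Fin p → ℝ) × (Fin p → ℝ),
        τ2 * Real.exp (-β * ∑ i, ((s₁ i + u.1 i) - (s₂ i + u.2 i)) ^ 2) ∂(μ.prod μ)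
      = τ2 / (1 + 4 * β * (σ2 : ℝ)) ^ ((p : ℝ) / 2)
          * Real.exp (-β * (∑ i, (s₁ i - s₂ i) ^ 2) / (1 + 4 * β * (σ2 : ℝ))) := by
  subst hμ
  have hint : Integrable (fun u : (Fin p → ℝ) × (Fin p → ℝ) =>
      exp (-β * ∑ i, ((s₁ i + u.1 i) - (s₂ i + u.2 i)) ^ 2))
      ((Measure.pi fun _ => gaussianReal 0 σ2).prod (Measure.pi fun _ => gaussianReal 0 σ2)) := by
    refine .of_bound (by fun_prop) 1 (.of_forall fun u => ?_)
    rw [norm_of_nonneg (exp_nonneg _), exp_le_one_iff, neg_mul, neg_nonpos]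
    positivity
  have hdiff : ∀ x y : Fin p → ℝ, ∑ i, ((s₁ i + x i) - (s₂ i + y i)) ^ 2
      = ∑ i, (x i + (s₁ i - s₂ i) - y i) ^ 2 :=
    fun x y => Finset.sum_congr rfl fun i _ => by ring
  rw [integral_const_mul, integral_prod _ hint]
  simp_rw [hdiff]
  rw [integral_integral_exp_neg_mul_sum_add_sub_sq_pi_gaussianReal hβ.le, Fintype.card_fin,
    mul_div_right_comm (-β), neg_div]
  ring

/-- **Equation (7): the induced squared-exponential covariance.** If `u₁, u₂` are independent
`N(0, σ²I_p)` Gaussian vectors in `ℝ^p`, then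
`E[τ² exp(-β‖(s₁+u₁)-(s₂+u₂)‖²)] = (τ²/(1+4βσ²)^(p/2)) exp(-β‖s₁-s₂‖²/(1+4βσ²))`. -/
theorem induced_sqexp_covariance
    (p : ℕ) (hp : 1 ≤ p) (τ2 β : ℝ) (hτ : 0 < τ2) (hβ : 0 < β) (σ2 : NNReal)
    (s₁ s₂ : Fin p → ℝ)
    (μ : Measure (Fin p → ℝ)) (hμ : μ = Measure.pi fun _ => gaussianReal 0 σ2) :
    ∫ u : (Fin p → ℝ) × (Fin p → ℝ),
        τ2 * Real.exp (-β * ∑ i, ((s₁ i + u.1 i) - (s₂ i + u.2 i)) ^ 2) ∂(μ.prod μ)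
      = τ2 / (1 + 4 * β * (σ2 : ℝ)) ^ ((p : ℝ) / 2)
          * Real.exp (-β * (∑ i, (s₁ i - s₂ i) ^ 2) / (1 + 4 * β * (σ2 : ℝ))) :=
  induced_sqexp_covariance_general p τ2 β hβ σ2 s₁ s₂ μ hμ
end
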